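/- For each p > 0, the function r ↦ I_p(r) is continuously differentiable on (0, ∞) and its derivative at r = 1 equals I_p(1)/2. -/

import Mathlib

open MeasureTheory

noncomputable def e (t : ℝ) : ℂ := Complex.exp (2 * Real.pi * Complex.I * t)

/-- I_p(r) = ∫₀¹ |1 - r^{1/p} e(t)|^p dt -/
noncomputable def Ip (p r : ℝ) : ℝ :=
  ∫ t in (0:ℝ)..1, ‖1 - ((r ^ (1/p) : ℝ) : ℂ) * e t‖ ^ p

/-!
With `s = r ^ (1 / p)` and `c = cos (2πt)`, the integrand is `Q(s, c) ^ (p / 2)` where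
`Q(s, c) = 1 - 2sc + s²`. The identity `Q(s, c) = s² Q(1/s, c)` gives the functional equation
`I_p(r) = r I_p(1/r)`, and differentiating it at `r = 1` yields `I_p'(1) = I_p(1) - I_p'(1)`.

Differentiation under the integral sign is justified by `|∂ₛ Q^{p/2}| ≤ p Q^{(p-1)/2}` together
with `s(1 - c) ≲ Q ≲ 1` for `s` near `s₀ > 0`; when `p < 1` this dominates the derivative by a
multiple of `(1 - cos 2πt)^{(p-1)/2}`, which is integrable because `1 - cos 2πt ≥ 8t²` near `t = 0`.
-/

open Set Real Filter Topology Metric intervalIntegral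

lemma rpow_le_rpow_add_rpow {m x M : ℝ} (hm : 0 < m) (hmx : m ≤ x) (hxM : x ≤ M) (a : ℝ) :
    x ^ a ≤ m ^ a + M ^ a := by
  rcases le_total 0 a with ha | ha
  · linarith [rpow_le_rpow (hm.le.trans hmx) hxM ha, rpow_nonneg hm.le a]
  · linarith [rpow_le_rpow_of_nonpos hm hmx ha, rpow_nonneg (hm.le.trans (hmx.trans hxM)) a]

lemma contDiffOn_one_of_hasDerivAt {𝕜 F : Type*} [NontriviallyNormedField 𝕜]
    [NormedAddCommGroup F] [NormedSpace 𝕜 F] {f f' : 𝕜 → F} {s : Set 𝕜} (hs : IsOpen s)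
    (hf : ∀ x ∈ s, HasDerivAt f (f' x) x) (hf' : ContinuousOn f' s) : ContDiffOn 𝕜 1 f s := by
  rw [contDiffOn_one_iff_derivWithin hs.uniqueDiffOn]
  refine ⟨fun x hx => (hf x hx).differentiableAt.differentiableWithinAt,
    hf'.congr fun x hx => ?_⟩
  rw [derivWithin_of_isOpen hs hx, (hf x hx).deriv]

lemma deriv_eq_half_of_eq_mul_inv {f : ℝ → ℝ} (hf : DifferentiableAt ℝ f 1)
    (h : ∀ᶠ r in 𝓝 1, f r = r * f r⁻¹) : deriv f 1 = f 1 / 2 := by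
  have hf_at_inv_one : HasDerivAt f (deriv f 1) 1⁻¹ := by rw [inv_one]; exact hf.hasDerivAt
  have hf_inv : HasDerivAt (fun r => f r⁻¹) (-deriv f 1) 1 := by
    have h := hf_at_inv_one.scomp 1 (hasDerivAt_inv one_ne_zero)
    simp only [one_pow, inv_one, smul_eq_mul, neg_mul, one_mul] at h
    exact h
  have h_eq := (((hasDerivAt_id 1).mul hf_inv).congr_of_eventuallyEq h).unique hf.hasDerivAt
  simp only [inv_one, one_mul, mul_neg] at h_eq
  linarith

lemma eight_mul_sq_le_one_sub_cos {t : ℝ} (ht : |t| ≤ 1 / 2) :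
    8 * t ^ 2 ≤ 1 - cos (2 * π * t) := by
  have h := cos_le_one_sub_mul_cos_sq (x := 2 * π * t) (by
    rw [abs_mul, abs_of_pos (by positivity)]; nlinarith [pi_pos])
  have : 2 / π ^ 2 * (2 * π * t) ^ 2 = 8 * t ^ 2 := by field_simp; ring
  linarith

lemma intervalIntegrable_one_sub_cos_rpow {a : ℝ} (ha : -1 / 2 < a) :
    IntervalIntegrable (fun t => (1 - cos (2 * π * t)) ^ a) volume 0 1 := by
  rcases le_total 0 a with ha₀ | ha₀
  · exact (Continuous.rpow_const (by fun_prop) fun _ => Or.inr ha₀).intervalIntegrable 0 1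
  have h_half : IntervalIntegrable (fun t => (1 - cos (2 * π * t)) ^ a) volume 0 (1 / 2) := by
    refine (intervalIntegrable_rpow' (r := 2 * a) (by linarith)).mono_fun'
      (Measurable.aestronglyMeasurable (by fun_prop)) ?_
    rw [EventuallyLE, ae_restrict_iff' measurableSet_uIoc, uIoc_of_le (by norm_num)]
    refine Eventually.of_forall fun t ht => ?_
    have h8 := eight_mul_sq_le_one_sub_cos (t := t) (by rw [abs_of_pos ht.1]; exact ht.2)
    rw [norm_of_nonneg (rpow_nonneg (by linarith [sq_nonneg t]) a), rpow_mul ht.1.le]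
    exact rpow_le_rpow_of_nonpos (rpow_pos_of_pos ht.1 2) (by norm_cast; linarith [sq_nonneg t])
      ha₀
  have h_sym : IntervalIntegrable (fun t => (1 - cos (2 * π * t)) ^ a) volume (1 / 2) 1 := by
    convert (h_half.comp_sub_left 1).symm using 1
    · ext t; rw [mul_sub, mul_one, cos_two_pi_sub]
    all_goals norm_num
  exact h_half.trans h_sym

lemma ae_cos_two_pi_mul_ne_one : ∀ᵐ t : ℝ, cos (2 * π * t) ≠ 1 := by
  have h : {t : ℝ | cos (2 * π * t) = 1} ⊆ range ((↑) : ℤ → ℝ) := by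
    intro t ht
    obtain ⟨n, hn⟩ := (cos_eq_one_iff _).1 ht
    exact ⟨n, by nlinarith [pi_pos]⟩
  exact ((countable_range _).mono h).ae_notMem volume

namespace Ip

/-- `Q s c = ‖1 - s * w‖ ^ 2` for any `w : ℂ` with `‖w‖ = 1` and `w.re = c`. -/
noncomputable def Q (s c : ℝ) : ℝ := 1 - 2 * s * c + s ^ 2

lemma Q_eq_sq_mul_Q_inv {a : ℝ} (ha : a ≠ 0) (c : ℝ) : Q a c = a ^ 2 * Q a⁻¹ c := by
  unfold Q; field_simp; ring

lemma sub_sq_le_Q {s c : ℝ} (hc : c ^ 2 ≤ 1) : (s - c) ^ 2 ≤ Q s c := by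
  unfold Q; nlinarith

lemma two_mul_one_sub_le_Q (s c : ℝ) : 2 * s * (1 - c) ≤ Q s c := by
  unfold Q; nlinarith [sq_nonneg (1 - s)]

lemma Q_pos {s c : ℝ} (hs : 0 < s) (hc : c < 1) : 0 < Q s c :=
  (mul_pos (mul_pos two_pos hs) (sub_pos.2 hc)).trans_le (two_mul_one_sub_le_Q s c)

lemma Q_le_one_add_sq {s c : ℝ} (hs : 0 ≤ s) (hc : -1 ≤ c) : Q s c ≤ (1 + s) ^ 2 := by
  unfold Q; nlinarith [mul_nonneg hs (neg_le_iff_add_nonneg.1 hc)]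

lemma norm_one_sub_mul_sq {w : ℂ} (hw : ‖w‖ = 1) (s : ℝ) : ‖1 - s * w‖ ^ 2 = Q s w.re := by
  have hw2 : w.re ^ 2 + w.im ^ 2 = 1 := by
    have := Complex.sq_norm w
    rw [hw, Complex.normSq_apply] at this
    linear_combination -this
  rw [Complex.sq_norm, Complex.normSq_apply, Q]
  simp only [Complex.sub_re, Complex.sub_im, Complex.one_re, Complex.one_im, Complex.mul_re,
    Complex.mul_im, Complex.ofReal_re, Complex.ofReal_im]
  linear_combination s ^ 2 * hw2

lemma norm_one_sub_mul_e_rpow (p s t : ℝ) :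
    ‖1 - (s : ℂ) * e t‖ ^ p = Q s (cos (2 * π * t)) ^ (p / 2) := by
  have he : ‖e t‖ = 1 := by
    rw [e, show 2 * π * Complex.I * t = (2 * π * t : ℝ) * Complex.I by push_cast; ring]
    exact Complex.norm_exp_ofReal_mul_I _
  have he_re : (e t).re = cos (2 * π * t) := by
    rw [e, show 2 * π * Complex.I * t = (2 * π * t : ℝ) * Complex.I by push_cast; ring]
    exact Complex.exp_ofReal_mul_I_re _
  rw [← he_re, ← norm_one_sub_mul_sq he, ← rpow_natCast, ← rpow_mul (norm_nonneg _)]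
  ring_nf

lemma hasDerivAt_Q_rpow (p : ℝ) {s c : ℝ} (hQ : Q s c ≠ 0) :
    HasDerivAt (fun s => Q s c ^ (p / 2)) (p * (s - c) * Q s c ^ (p / 2 - 1)) s := by
  have hQ' : HasDerivAt (fun s => Q s c) (2 * s - 2 * c) s := by
    have := (((hasDerivAt_id' s).mul_const (2 * c)).const_sub 1).fun_add
      ((hasDerivAt_id' s).fun_pow 2)
    refine (this.congr_deriv (by push_cast; ring)).congr_of_eventuallyEq (.of_forall fun x => ?_)
    simp only [Q]; ring
  exact (hQ'.rpow_const (Or.inl hQ)).congr_deriv (by ring)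

lemma abs_deriv_Q_rpow_le {p s c : ℝ} (hp : 0 ≤ p) (hc : c ^ 2 ≤ 1) (hQ : 0 < Q s c) :
    |p * (s - c) * Q s c ^ (p / 2 - 1)| ≤ p * Q s c ^ ((p - 1) / 2) := by
  have h_sub : |s - c| ≤ Q s c ^ (1 / 2 : ℝ) := by
    rw [← sqrt_eq_rpow, ← sqrt_sq_eq_abs]
    exact sqrt_le_sqrt (sub_sq_le_Q hc)
  calc |p * (s - c) * Q s c ^ (p / 2 - 1)| = p * |s - c| * Q s c ^ (p / 2 - 1) := by
        rw [abs_mul, abs_mul, abs_of_nonneg hp, abs_of_nonneg (rpow_nonneg hQ.le _)]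
    _ ≤ p * Q s c ^ (1 / 2 : ℝ) * Q s c ^ (p / 2 - 1) := by gcongr
    _ = p * Q s c ^ ((p - 1) / 2) := by
        rw [mul_assoc, ← rpow_add hQ]; ring_nf

noncomputable def J (p s : ℝ) : ℝ := ∫ t in (0:ℝ)..1, Q s (cos (2 * π * t)) ^ (p / 2)

noncomputable def J' (p s : ℝ) : ℝ :=
  ∫ t in (0:ℝ)..1, p * (s - cos (2 * π * t)) * Q s (cos (2 * π * t)) ^ (p / 2 - 1)

noncomputable def derivBound (p s₀ t : ℝ) : ℝ :=
  p * (s₀ ^ ((p - 1) / 2) * (1 - cos (2 * π * t)) ^ ((p - 1) / 2) +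
    ((1 + 2 * s₀) ^ 2) ^ ((p - 1) / 2))

lemma norm_deriv_le_derivBound {p s₀ x t : ℝ} (hp : 0 ≤ p) (hs₀ : 0 < s₀)
    (hx : x ∈ ball s₀ (s₀ / 2)) (ht : cos (2 * π * t) ≠ 1) :
    ‖p * (x - cos (2 * π * t)) * Q x (cos (2 * π * t)) ^ (p / 2 - 1)‖ ≤ derivBound p s₀ t := by
  rw [mem_ball, dist_eq, abs_lt] at hx
  set c := cos (2 * π * t)
  have hc : c < 1 := (cos_le_one _).lt_of_ne ht
  have hm : 0 < s₀ * (1 - c) := mul_pos hs₀ (by linarith)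
  have h_lower : s₀ * (1 - c) ≤ Q x c := by nlinarith [two_mul_one_sub_le_Q x c]
  have h_upper : Q x c ≤ (1 + 2 * s₀) ^ 2 :=
    (Q_le_one_add_sq (by linarith) (neg_one_le_cos _)).trans (by gcongr <;> linarith)
  calc _ ≤ p * Q x c ^ ((p - 1) / 2) :=
        abs_deriv_Q_rpow_le hp (cos_sq_le_one _) (hm.trans_le h_lower)
    _ ≤ derivBound p s₀ t := by
      rw [derivBound, ← mul_rpow hs₀.le (by linarith)]
      exact mul_le_mul_of_nonneg_left (rpow_le_rpow_add_rpow hm h_lower h_upper _) hp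

lemma intervalIntegrable_derivBound {p : ℝ} (hp : 0 < p) (s₀ : ℝ) :
    IntervalIntegrable (derivBound p s₀) volume 0 1 :=
  (((intervalIntegrable_one_sub_cos_rpow (by linarith)).const_mul _).add
    intervalIntegrable_const).const_mul p

lemma continuous_Q_cos_rpow {p : ℝ} (hp : 0 ≤ p) (s : ℝ) :
    Continuous fun t => Q s (cos (2 * π * t)) ^ (p / 2) :=
  Continuous.rpow_const (by unfold Q; fun_prop) fun _ => Or.inr (by positivity)

lemma measurable_deriv_integrand (p s : ℝ) :
    Measurable fun t => p * (s - cos (2 * π * t)) * Q s (cos (2 * π * t)) ^ (p / 2 - 1) := by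
  unfold Q; fun_prop

lemma hasDerivAt_J {p s₀ : ℝ} (hp : 0 < p) (hs₀ : 0 < s₀) : HasDerivAt (J p) (J' p s₀) s₀ := by
  refine (hasDerivAt_integral_of_dominated_loc_of_deriv_le
    (F' := fun x t => p * (x - cos (2 * π * t)) * Q x (cos (2 * π * t)) ^ (p / 2 - 1))
    (ball_mem_nhds s₀ (half_pos hs₀))
    (.of_forall fun x => (continuous_Q_cos_rpow hp.le x).aestronglyMeasurable)
    ((continuous_Q_cos_rpow hp.le s₀).intervalIntegrable 0 1)
    (measurable_deriv_integrand p s₀).aestronglyMeasurable ?_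
    (intervalIntegrable_derivBound hp s₀) ?_).2
  · filter_upwards [ae_cos_two_pi_mul_ne_one] with t ht _ x hx
    exact norm_deriv_le_derivBound hp.le hs₀ hx ht
  · filter_upwards [ae_cos_two_pi_mul_ne_one] with t ht _ x hx
    have hx₀ : 0 < x := by rw [mem_ball, dist_eq, abs_lt] at hx; linarith
    exact hasDerivAt_Q_rpow p (Q_pos hx₀ ((cos_le_one _).lt_of_ne ht)).ne'

lemma continuousAt_J' {p s₀ : ℝ} (hp : 0 < p) (hs₀ : 0 < s₀) : ContinuousAt (J' p) s₀ := by
  refine continuousAt_of_dominated_interval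
    (.of_forall fun x => (measurable_deriv_integrand p x).aestronglyMeasurable) ?_
    (intervalIntegrable_derivBound hp s₀) ?_
  · filter_upwards [ball_mem_nhds s₀ (half_pos hs₀)] with x hx
    filter_upwards [ae_cos_two_pi_mul_ne_one] with t ht _
    exact norm_deriv_le_derivBound hp.le hs₀ hx ht
  · filter_upwards [ae_cos_two_pi_mul_ne_one] with t ht _
    have hQ := Q_pos hs₀ ((cos_le_one (2 * π * t)).lt_of_ne ht)
    exact (continuousAt_const.mul (continuousAt_id.sub continuousAt_const)).mul
      (ContinuousAt.rpow_const (by unfold Q; fun_prop) (Or.inl hQ.ne'))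

lemma contDiffOn_J {p : ℝ} (hp : 0 < p) : ContDiffOn ℝ 1 (J p) (Ioi 0) :=
  contDiffOn_one_of_hasDerivAt isOpen_Ioi (fun _ hs => hasDerivAt_J hp hs)
    fun _ hs => (continuousAt_J' hp hs).continuousWithinAt

lemma J_eq_rpow_mul_J_inv (p : ℝ) {a : ℝ} (ha : 0 < a) : J p a = a ^ p * J p a⁻¹ := by
  rw [J, J, ← intervalIntegral.integral_const_mul]
  refine integral_congr fun t _ => ?_
  have hQ : 0 ≤ Q a⁻¹ (cos (2 * π * t)) := (sq_nonneg _).trans (sub_sq_le_Q (cos_sq_le_one _))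
  rw [Q_eq_sq_mul_Q_inv ha.ne', mul_rpow (sq_nonneg a) hQ, ← rpow_natCast, ← rpow_mul ha.le]
  ring_nf

lemma eq_J_rpow (p r : ℝ) : Ip p r = J p (r ^ (1 / p)) :=
  integral_congr fun t _ => norm_one_sub_mul_e_rpow p _ t

lemma eq_mul_inv {p r : ℝ} (hp : p ≠ 0) (hr : 0 < r) : Ip p r = r * Ip p r⁻¹ := by
  rw [eq_J_rpow, eq_J_rpow, J_eq_rpow_mul_J_inv p (rpow_pos_of_pos hr _), ← rpow_mul hr.le,
    one_div_mul_cancel hp, rpow_one, inv_rpow hr.le]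

lemma contDiffOn_Ioi {p : ℝ} (hp : 0 < p) : ContDiffOn ℝ 1 (Ip p) (Ioi 0) := by
  rw [show Ip p = fun r => J p (r ^ (1 / p)) from funext (eq_J_rpow p)]
  exact (contDiffOn_J hp).comp (fun r hr => (contDiffAt_rpow_const_of_ne hr.ne').contDiffWithinAt)
    fun r hr => rpow_pos_of_pos hr _

end Ip

theorem Ip_c1_and_deriv_at_one (p : ℝ) (hp : 0 < p) :
    ContDiffOn ℝ 1 (Ip p) (Set.Ioi (0:ℝ)) ∧ deriv (Ip p) 1 = Ip p 1 / 2 := by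
  have hC1 := Ip.contDiffOn_Ioi hp
  refine ⟨hC1, deriv_eq_half_of_eq_mul_inv ?_ ?_⟩
  · exact (hC1.differentiableOn one_ne_zero).differentiableAt (Ioi_mem_nhds one_pos)
  · filter_upwards [Ioi_mem_nhds one_pos] with r hr using Ip.eq_mul_inv hp.ne' hr
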